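/- Let λ ∈ ℝⁿ lie in the Garding cone Γ_{k+1} = {λ : σ_l(λ) > 0 for all l = 1,…,k+1}, where 1 ≤ k ≤ n-1. Then σ_k(λ)·σ₁(λ) − (k+1)·σ_{k+1}(λ) ≥ (1/n)·σ_k(λ)·σ₁(λ). (Equivalently, Σ_i λ_i² σ_{k-1}(λ|i) ≥ (1/n)σ_k σ₁ whenever σ_{k+1} > 0 and σ_k, σ_{k-1}, σ₁ > 0.) -/
import Mathlib


open Finset

/-- The `k`-th elementary symmetric polynomial of `l : Fin n → ℝ`. -/
noncomputable def esymm (n k : ℕ) (l : Fin n → ℝ) : ℝ :=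
  ∑ s ∈ Finset.univ.powersetCard k, ∏ i ∈ s, l i

lemma pair_sum {ι : Type*} [DecidableEq ι] (s : Finset ι) (g : Finset ι → ℝ) :
    ∑ i ∈ s, ∑ j ∈ s.erase i, g {i, j} = 2 * ∑ t ∈ s.powersetCard 2, g t := by
  induction s using Finset.induction_on with
  | empty =>
    rw [show (Finset.powersetCard 2 (∅:Finset ι)) = ∅ from Finset.powersetCard_eq_empty.2 (by simp)]
    simp
  | @insert a s ha ih =>
    rw [Finset.sum_insert ha, Finset.erase_insert ha]
    have h1 : ∀ i ∈ s, ∑ j ∈ (insert a s).erase i, g {i, j}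
        = g {i, a} + ∑ j ∈ s.erase i, g {i, j} := by
      intro i hi
      have hia : a ≠ i := fun h => ha (h ▸ hi)
      rw [Finset.erase_insert_of_ne hia, Finset.sum_insert (fun h => ha (Finset.mem_of_mem_erase h))]
    rw [Finset.sum_congr rfl h1, Finset.sum_add_distrib, ih]
    have h2 : (insert a s).powersetCard 2 = s.powersetCard 2 ∪ (s.powersetCard 1).image (insert a) :=
      Finset.powersetCard_succ_insert ha 1
    have hdisj : Disjoint (s.powersetCard 2) ((s.powersetCard 1).image (insert a)) := by
      rw [Finset.disjoint_left]
      rintro t ht ht'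
      obtain ⟨u, hu, rfl⟩ := Finset.mem_image.1 ht'
      have : insert a u ⊆ s := (Finset.mem_powersetCard.1 ht).1
      exact ha (this (Finset.mem_insert_self a u))
    have hinj : Set.InjOn (insert a) ((s.powersetCard 1 : Finset (Finset ι)) : Set (Finset ι)) := by
      intro u hu v hv huv
      rw [Finset.mem_coe] at hu hv
      have hau : a ∉ u := fun h => ha ((Finset.mem_powersetCard.1 hu).1 h)
      have hav : a ∉ v := fun h => ha ((Finset.mem_powersetCard.1 hv).1 h)
      rw [← Finset.erase_insert hau, ← Finset.erase_insert hav, huv]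
    rw [h2, Finset.sum_union hdisj, Finset.sum_image hinj]
    rw [Finset.powersetCard_one, Finset.sum_map]
    simp only [Function.Embedding.coeFn_mk]
    have h3 : ∀ j ∈ s, g (insert a {j}) = g {a, j} := fun j _ => rfl
    rw [Finset.sum_congr rfl h3]
    have h4 : ∀ i ∈ s, g {i, a} = g {a, i} := fun i _ => by rw [Finset.pair_comm]
    rw [Finset.sum_congr rfl h4]
    ring

lemma sum_pcard_compl (m r : ℕ) (hr : r ≤ m) (g : Finset (Fin m) → ℝ) :
    ∑ t ∈ (univ : Finset (Fin m)).powersetCard r, g tᶜ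
      = ∑ u ∈ (univ : Finset (Fin m)).powersetCard (m - r), g u := by
  refine Finset.sum_nbij' (fun t => tᶜ) (fun u => uᶜ) ?_ ?_ ?_ ?_ ?_
  · intro t ht
    rw [Finset.mem_powersetCard] at ht ⊢
    exact ⟨Finset.subset_univ _, by rw [Finset.card_compl, ht.2, Fintype.card_fin]⟩
  · intro u hu
    rw [Finset.mem_powersetCard] at hu ⊢
    refine ⟨Finset.subset_univ _, ?_⟩
    rw [Finset.card_compl, hu.2, Fintype.card_fin]
    omega
  · intro t _; exact compl_compl t
  · intro u _; exact compl_compl u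
  · intro t _; rfl

lemma esymm_top (m : ℕ) (x : Fin m → ℝ) : esymm m m x = ∏ i, x i := by
  unfold esymm
  have h : (univ : Finset (Fin m)).card = m := by simp
  have h2 := Finset.powersetCard_self (univ : Finset (Fin m))
  rw [h] at h2
  rw [h2, Finset.sum_singleton]

lemma esymm_pred (m : ℕ) (hm : 1 ≤ m) (x : Fin m → ℝ) :
    esymm m (m - 1) x = ∑ i, ∏ j ∈ univ.erase i, x j := by
  unfold esymm
  rw [← sum_pcard_compl m 1 hm (fun u => ∏ i ∈ u, x i)]
  rw [Finset.powersetCard_one, Finset.sum_map]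
  refine Finset.sum_congr rfl fun i _ => ?_
  congr 1
  ext j
  simp [Finset.mem_erase, eq_comm, Ne]

lemma esymm_pred2 (m : ℕ) (hm : 2 ≤ m) (x : Fin m → ℝ) :
    2 * esymm m (m - 2) x = ∑ i, ∑ j ∈ univ.erase i, ∏ r ∈ (univ.erase i).erase j, x r := by
  unfold esymm
  rw [← sum_pcard_compl m 2 hm (fun u => ∏ i ∈ u, x i)]
  rw [← pair_sum]
  refine Finset.sum_congr rfl fun i _ => Finset.sum_congr rfl fun j hj => ?_
  congr 1
  ext r
  simp only [Finset.mem_compl, Finset.mem_insert, Finset.mem_singleton, Finset.mem_erase,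
    Finset.mem_univ, and_true]
  push_neg
  tauto

lemma newton_top (m : ℕ) (hm : 2 ≤ m) (x : Fin m → ℝ) :
    2 * (m:ℝ) * (esymm m m x * esymm m (m-2) x) ≤ ((m - 1 : ℕ) : ℝ) * (esymm m (m-1) x)^2 := by
  set P : Fin m → ℝ := fun i => ∏ j ∈ univ.erase i, x j with hP
  have hprod : ∀ i : Fin m, ∀ j ∈ univ.erase i,
      (∏ r, x r) * ∏ r ∈ (univ.erase i).erase j, x r = P i * P j := by
    intro i j hj
    have hji : j ≠ i := (Finset.mem_erase.1 hj).1
    have h1 : P i = x j * ∏ r ∈ (univ.erase i).erase j, x r := (Finset.mul_prod_erase _ x hj).symm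
    have hij : i ∈ univ.erase j := Finset.mem_erase.2 ⟨fun h => hji h.symm, Finset.mem_univ i⟩
    have h2 : P j = x i * ∏ r ∈ (univ.erase j).erase i, x r := (Finset.mul_prod_erase _ x hij).symm
    have h3 : (univ.erase j).erase i = (univ.erase i).erase j := Finset.erase_right_comm
    have h4 : (∏ r, x r) = x i * P i := (Finset.mul_prod_erase univ x (Finset.mem_univ i)).symm
    rw [h2, h3]
    rw [h1]
    nth_rewrite 1 [h4]
    rw [h1]
    ring_nf
  have hiden : esymm m m x * (2 * esymm m (m-2) x) = (∑ i, P i)^2 - ∑ i, (P i)^2 := by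
    rw [esymm_pred2 m hm, esymm_top, Finset.mul_sum]
    have step : ∀ i ∈ (univ : Finset (Fin m)),
        (∏ r, x r) * ∑ j ∈ univ.erase i, ∏ r ∈ (univ.erase i).erase j, x r
          = P i * ((∑ j, P j) - P i) := by
      intro i _
      rw [Finset.mul_sum, Finset.sum_congr rfl (hprod i), ← Finset.mul_sum,
        Finset.sum_erase_eq_sub (Finset.mem_univ i)]
    rw [Finset.sum_congr rfl step]
    simp only [mul_sub]
    rw [Finset.sum_sub_distrib, ← Finset.sum_mul]
    ring
  have hCS : (∑ i, P i)^2 ≤ (m:ℝ) * ∑ i, (P i)^2 := by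
    have h := sq_sum_le_card_mul_sum_sq (s := (univ : Finset (Fin m))) (f := P)
    simpa using h
  have key : 2 * (m:ℝ) * (esymm m m x * esymm m (m-2) x)
      = (m:ℝ) * ((∑ i, P i)^2 - ∑ i, (P i)^2) := by linear_combination (m:ℝ) * hiden
  rw [key, Nat.cast_sub (by omega : 1 ≤ m), Nat.cast_one, esymm_pred m (by omega)]
  have hm2 : (2:ℝ) ≤ (m:ℝ) := by exact_mod_cast hm
  nlinarith [hCS]

lemma esymm_eq_multiset (n r : ℕ) (l : Fin n → ℝ) :
    esymm n r l = (Multiset.map l (univ : Finset (Fin n)).val).esymm r := by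
  rw [Finset.esymm_map_val]
  rfl

lemma newton_top_multiset (m : ℕ) (hm : 2 ≤ m) (s : Multiset ℝ) (hs : Multiset.card s = m) :
    2 * (m:ℝ) * (s.esymm m * s.esymm (m-2)) ≤ ((m - 1 : ℕ) : ℝ) * (s.esymm (m-1))^2 := by
  have hL : s.toList.length = m := by rw [Multiset.length_toList, hs]
  set x : Fin m → ℝ := fun i => s.toList.get (Fin.cast hL.symm i) with hx
  have hxs : Multiset.map x (univ : Finset (Fin m)).val = s := by
    have h1 : List.ofFn x = s.toList := by
      apply List.ext_getElem
      · simp [hL]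
      · intro i h1 h2
        simp [hx]
    calc Multiset.map x (univ : Finset (Fin m)).val
        = ↑(List.ofFn x) := Fin.univ_val_map x
      _ = s := by rw [h1, Multiset.coe_toList]
  have e1 : s.esymm m = esymm m m x := by rw [esymm_eq_multiset, hxs]
  have e2 : s.esymm (m-1) = esymm m (m-1) x := by rw [esymm_eq_multiset, hxs]
  have e3 : s.esymm (m-2) = esymm m (m-2) x := by rw [esymm_eq_multiset, hxs]
  rw [e1, e2, e3]
  exact newton_top m hm x

open Polynomial in
lemma newtonE (n t : ℕ) (ht : 1 ≤ t) (htn : t + 1 ≤ n) (l : Fin n → ℝ) :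
    ((t:ℝ)+1) * ((n-t-1).factorial : ℝ) * ((n-t+1).factorial : ℝ)
        * (esymm n (t+1) l * esymm n (t-1) l)
      ≤ (t:ℝ) * (((n-t).factorial : ℝ))^2 * (esymm n t l)^2 := by
  classical
  set f : ℝ[X] := ∏ i : Fin n, (X - C (l i)) with hf
  have hmonic : f.Monic := monic_prod_of_monic _ _ fun i _ => monic_X_sub_C _
  have hdeg : f.natDegree = n := by
    rw [hf, natDegree_prod_of_monic _ _ fun i _ => monic_X_sub_C _]
    simp [natDegree_X_sub_C]
  have hfprod : f = ((Multiset.map l (univ : Finset (Fin n)).val).map fun a => X - C a).prod := by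
    rw [hf, Finset.prod_eq_multiset_prod, Multiset.map_map]
    rfl
  have hcardM : Multiset.card (Multiset.map l (univ : Finset (Fin n)).val) = n := by simp
  have hfroots : f.roots = Multiset.map l (univ : Finset (Fin n)).val := by
    rw [hfprod, roots_multiset_prod_X_sub_C]
  have hfcoeff : ∀ r : ℕ, r ≤ n → f.coeff (n - r) = (-1)^r * esymm n r l := by
    intro r hr
    rw [hfprod, Multiset.prod_X_sub_C_coeff _ (by rw [hcardM]; omega)]
    rw [hcardM, esymm_eq_multiset]
    have : n - (n - r) = r := by omega
    rw [this]
  -- coefficient of iterated derivatives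
  have hco : ∀ (j r : ℕ), (derivative^[j] f).coeff r
      = ((r + j).descFactorial j : ℝ) * f.coeff (r + j) := by
    intro j r
    rw [Polynomial.coeff_iterate_derivative, nsmul_eq_mul]
  -- natDegree of iterated derivatives
  have hdegj : ∀ j, j ≤ n → (derivative^[j] f).natDegree = n - j := by
    intro j hj
    refine le_antisymm ((natDegree_iterate_derivative f j).trans (by rw [hdeg])) ?_
    apply le_natDegree_of_ne_zero
    rw [hco j (n - j), show n - j + j = n by omega]
    have h1 : f.coeff n = 1 := by
      have := hmonic.coeff_natDegree
      rwa [hdeg] at this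
    rw [h1, mul_one]
    have h2 : 0 < n.descFactorial j := by
      rcases Nat.eq_zero_or_pos (n.descFactorial j) with h | h
      · exact absurd (Nat.descFactorial_eq_zero_iff_lt.1 h) (by omega)
      · exact h
    exact_mod_cast h2.ne'
  have hcardj : ∀ j, j ≤ n → Multiset.card ((derivative^[j] f).roots) = n - j := by
    intro j
    induction j with
    | zero => intro _; simp [hfroots, hcardM]
    | succ j ih =>
      intro hj
      have hj' : j ≤ n := by omega
      have h1 := Polynomial.card_roots_le_derivative (derivative^[j] f)
      rw [ih hj'] at h1
      have h2 : Multiset.card ((derivative^[j+1] f).roots) ≤ n - (j+1) := by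
        have := Polynomial.card_roots' (derivative^[j+1] f)
        rwa [hdegj (j+1) hj] at this
      rw [Function.iterate_succ_apply'] at h2 ⊢
      omega
  -- specialize to D = n - t - 1 iterations
  set D : ℕ := n - t - 1 with hD
  set g : ℝ[X] := derivative^[D] f with hg
  set m : ℕ := t + 1 with hm
  have hDn : D ≤ n := by omega
  have hgdeg : g.natDegree = m := by rw [hg, hdegj D hDn]; omega
  have hgroots : Multiset.card g.roots = m := by rw [hg, hcardj D hDn]; omega
  set N : ℝ := (n.descFactorial D : ℝ) with hN
  have hNpos : 0 < N := by
    rw [hN]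
    exact_mod_cast Nat.pos_of_ne_zero (fun h =>
      absurd (Nat.descFactorial_eq_zero_iff_lt.1 h) (by omega))
  have hlc : g.leadingCoeff = N := by
    rw [Polynomial.leadingCoeff, hgdeg, hg, hco D m, show m + D = n by omega]
    have h1 : f.coeff n = 1 := by
      have := hmonic.coeff_natDegree
      rwa [hdeg] at this
    rw [h1, mul_one]
  -- the key relation between esymm of roots of g and esymm of l
  have key : ∀ r : ℕ, r ≤ m → N * g.roots.esymm r
      = ((n - r).descFactorial D : ℝ) * esymm n r l := by
    intro r hr
    have h1 : g.coeff (m - r) = g.leadingCoeff * (-1)^r * g.roots.esymm r := by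
      have h2 := Polynomial.coeff_eq_esymm_roots_of_card
        (by rw [hgroots, hgdeg] : Multiset.card g.roots = g.natDegree)
        (by rw [hgdeg] ; omega : m - r ≤ g.natDegree)
      rwa [hgdeg, show m - (m - r) = r by omega] at h2
    have h3 : g.coeff (m - r) = ((n - r).descFactorial D : ℝ) * ((-1)^r * esymm n r l) := by
      rw [hg, hco D (m - r), show m - r + D = n - r by omega]
      rw [hfcoeff r (by omega)]
    rw [hlc] at h1
    have h4 : (N * g.roots.esymm r) * (-1:ℝ)^r
        = (((n - r).descFactorial D : ℝ) * esymm n r l) * (-1:ℝ)^r := by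
      rw [h1] at h3
      linear_combination h3
    exact mul_right_cancel₀ (pow_ne_zero r (by norm_num : (-1:ℝ) ≠ 0)) h4
  -- Newton's inequality for the roots of g
  have hN2 := newton_top_multiset m (by omega) g.roots hgroots
  rw [show m - 1 = t from rfl, show m - 2 = t - 1 by omega] at hN2
  have hmul := mul_le_mul_of_nonneg_left hN2 (mul_self_nonneg N)
  have k1 := key (t+1) (le_refl m)
  have k2 := key t (by omega)
  have k3 := key (t-1) (by omega)
  set d1 : ℝ := ((n - (t+1)).descFactorial D : ℝ) with hd1
  set d2 : ℝ := ((n - t).descFactorial D : ℝ) with hd2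
  set d3 : ℝ := ((n - (t-1)).descFactorial D : ℝ) with hd3
  have hfinal : 2 * ((m:ℕ):ℝ) * ((d1 * esymm n (t+1) l) * (d3 * esymm n (t-1) l))
      ≤ ((t:ℕ):ℝ) * (d2 * esymm n t l)^2 := by
    calc 2 * ((m:ℕ):ℝ) * ((d1 * esymm n (t+1) l) * (d3 * esymm n (t-1) l))
        = N * N * (2 * ((m:ℕ):ℝ) * (g.roots.esymm m * g.roots.esymm (t-1))) := by
          rw [show g.roots.esymm m = g.roots.esymm (t+1) from rfl]
          linear_combination (- 2 * ((m:ℕ):ℝ) * (d3 * esymm n (t-1) l)) * k1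
            + (- 2 * ((m:ℕ):ℝ) * N * g.roots.esymm (t+1)) * k3
      _ ≤ N * N * (((m - 1:ℕ):ℝ) * (g.roots.esymm t)^2) := hmul
      _ = ((t:ℕ):ℝ) * (d2 * esymm n t l)^2 := by
          rw [show ((m - 1:ℕ):ℝ) = ((t:ℕ):ℝ) from rfl]
          linear_combination (((t:ℕ):ℝ) * (N * g.roots.esymm t + d2 * esymm n t l)) * k2
  -- convert descFactorials to factorials
  have e1 : d1 = ((n-t-1).factorial : ℝ) := by
    rw [hd1, show n - (t+1) = n - t - 1 by omega, Nat.descFactorial_self]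
  have e2 : d2 = ((n-t).factorial : ℝ) := by
    rw [hd2]
    have h5 : (n - t - D).factorial * (n-t).descFactorial D = (n-t).factorial :=
      Nat.factorial_mul_descFactorial (by omega)
    rw [show n - t - D = 1 by omega] at h5
    simp only [Nat.factorial_one, one_mul] at h5
    rw [h5]
  have e3 : 2 * d3 = ((n-t+1).factorial : ℝ) := by
    rw [hd3, show n - (t-1) = n - t + 1 by omega]
    have h5 : (n - t + 1 - D).factorial * (n-t+1).descFactorial D = (n-t+1).factorial :=
      Nat.factorial_mul_descFactorial (by omega)
    rw [show n - t + 1 - D = 2 by omega] at h5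
    have h6 : (2:ℕ).factorial = 2 := rfl
    rw [h6] at h5
    exact_mod_cast congrArg (Nat.cast : ℕ → ℝ) h5
  calc ((t:ℝ)+1) * ((n-t-1).factorial : ℝ) * ((n-t+1).factorial : ℝ)
        * (esymm n (t+1) l * esymm n (t-1) l)
      = 2 * ((m:ℕ):ℝ) * ((d1 * esymm n (t+1) l) * (d3 * esymm n (t-1) l)) := by
        rw [← e1, ← e3, hm]
        push_cast
        ring
    _ ≤ ((t:ℕ):ℝ) * (d2 * esymm n t l)^2 := hfinal
    _ = (t:ℝ) * (((n-t).factorial : ℝ))^2 * (esymm n t l)^2 := by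
        rw [e2]; ring

lemma esymm_zero' (n : ℕ) (l : Fin n → ℝ) : esymm n 0 l = 1 := by
  unfold esymm
  rw [Finset.powersetCard_zero, Finset.sum_singleton, Finset.prod_empty]

theorem garding_cone_ineq (n k : ℕ) (hk1 : 1 ≤ k) (hk2 : k + 1 ≤ n) (l : Fin n → ℝ)
    (hΓ : ∀ m : ℕ, 1 ≤ m → m ≤ k + 1 → 0 < esymm n m l) :
    esymm n k l * esymm n 1 l - (k + 1 : ℝ) * esymm n (k + 1) l ≥
      (1 / (n : ℝ)) * esymm n k l * esymm n 1 l := by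
  set q : ℕ → ℝ := fun r => esymm n r l * (r.factorial : ℝ) * ((n - r).factorial : ℝ) with hq
  have hqpos : ∀ r, r ≤ k + 1 → 0 < q r := by
    intro r hr
    rcases Nat.eq_zero_or_pos r with rfl | hrp
    · simp only [hq, esymm_zero']
      positivity
    · have hE := hΓ r hrp hr
      rw [hq]
      positivity
  have hqnewton : ∀ t, 1 ≤ t → t + 1 ≤ n → q (t+1) * q (t-1) ≤ q t ^ 2 := by
    intro t ht htn
    obtain ⟨s, rfl⟩ : ∃ s, t = s + 1 := ⟨t - 1, by omega⟩
    have h := newtonE n (s+1) (by omega) (by omega) l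
    rw [show n - (s+1) - 1 = n - s - 2 by omega, show n - (s+1) + 1 = n - s by omega,
      show n - (s+1) = n - s - 1 by omega] at h
    simp only [Nat.add_sub_cancel] at h ⊢
    have c0 : (0:ℝ) ≤ (s.factorial : ℝ) * ((s+1).factorial : ℝ) := by positivity
    have h2 := mul_le_mul_of_nonneg_left h c0
    calc q (s+1+1) * q s
        = (s.factorial : ℝ) * ((s+1).factorial : ℝ) * (((((s+1:ℕ)):ℝ)+1)
            * ((n-s-2).factorial : ℝ) * ((n-s).factorial : ℝ)
            * (esymm n (s+1+1) l * esymm n s l)) := by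
          simp only [hq]
          simp only [show n - (s+1+1) = n - s - 2 by omega]
          push_cast [Nat.factorial_succ]
          ring
      _ ≤ (s.factorial : ℝ) * ((s+1).factorial : ℝ)
            * (((s+1:ℕ):ℝ) * (((n-s-1).factorial : ℝ))^2 * (esymm n (s+1) l)^2) := h2
      _ = q (s+1) ^ 2 := by
          simp only [hq]
          simp only [show n - (s+1) = n - s - 1 by omega]
          push_cast [Nat.factorial_succ]
          ring
  have chain : ∀ t, t ≤ k → (n.factorial : ℝ) * q (t+1) ≤ q t * q 1 := by
    intro t
    induction t with
    | zero =>
      intro _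
      have hq0 : q 0 = (n.factorial : ℝ) := by
        rw [hq]; simp [esymm_zero']
      rw [show (0:ℕ)+1 = 1 from rfl, hq0]
    | succ t ih =>
      intro htk
      have hN := hqnewton (t+1) (by omega) (by omega)
      simp only [Nat.add_sub_cancel] at hN
      have ih' := ih (by omega)
      have hqt := hqpos t (by omega)
      have hqt1 := hqpos (t+1) (by omega)
      have hnf : (0:ℝ) ≤ (n.factorial : ℝ) := by positivity
      have h6 : ((n.factorial : ℝ) * q (t+1+1)) * q t ≤ (q (t+1) * q 1) * q t := by
        nlinarith [hN, ih', hqt.le, hqt1.le, hnf]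
      exact le_of_mul_le_mul_right h6 hqt
  have hchain := chain k (le_refl k)
  -- unfold and cancel constants
  have hck : ((k+1).factorial : ℝ) = (((k:ℕ):ℝ)+1) * (k.factorial : ℝ) := by
    push_cast [Nat.factorial_succ]; ring
  have hcn : (n.factorial : ℝ) = (n:ℝ) * ((n-1).factorial : ℝ) := by
    rw [show n = (n-1)+1 by omega]
    push_cast [Nat.factorial_succ]
    ring
  have hcnk : ((n-k).factorial : ℝ) = ((n-k:ℕ):ℝ) * ((n-k-1).factorial : ℝ) := by
    rw [show n - k = (n-k-1)+1 by omega]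
    push_cast [Nat.factorial_succ]
    ring
  set c : ℝ := ((n-1).factorial : ℝ) * (k.factorial : ℝ) * ((n-k-1).factorial : ℝ) with hc
  have hcpos : 0 < c := by rw [hc]; positivity
  have hmain : (n:ℝ) * ((k:ℝ)+1) * esymm n (k+1) l
      ≤ ((n-k:ℕ):ℝ) * (esymm n k l * esymm n 1 l) := by
    have h7 : ((n:ℝ) * ((k:ℝ)+1) * esymm n (k+1) l) * c
        ≤ (((n-k:ℕ):ℝ) * (esymm n k l * esymm n 1 l)) * c := by
      calc ((n:ℝ) * ((k:ℝ)+1) * esymm n (k+1) l) * c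
          = (n.factorial : ℝ) * q (k+1) := by
            simp only [hq, hc]
            simp only [show n - (k+1) = n - k - 1 by omega]
            rw [hcn, hck]
            ring
        _ ≤ q k * q 1 := hchain
        _ = (((n-k:ℕ):ℝ) * (esymm n k l * esymm n 1 l)) * c := by
            simp only [hq, hc]
            rw [hcnk]
            simp only [Nat.factorial_one]
            ring
    exact le_of_mul_le_mul_right h7 hcpos
  have hE1 := hΓ 1 le_rfl (by omega)
  have hEk := hΓ k hk1 (by omega)
  have hE : 0 < esymm n k l * esymm n 1 l := mul_pos hEk hE1
  have hn0 : (0:ℝ) < n := by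
    have : 0 < n := by omega
    exact_mod_cast this
  have h8 : ((n-k:ℕ):ℝ) ≤ (n:ℝ) - 1 := by
    rw [Nat.cast_sub (by omega)]
    have hk' : (1:ℝ) ≤ (k:ℝ) := by exact_mod_cast hk1
    linarith
  rw [ge_iff_le, ← sub_nonneg]
  have h9 : 0 ≤ (n:ℝ) * (esymm n k l * esymm n 1 l - (↑k + 1) * esymm n (k + 1) l
      - 1 / (n:ℝ) * esymm n k l * esymm n 1 l) := by
    have expand : (n:ℝ) * (esymm n k l * esymm n 1 l - (↑k + 1) * esymm n (k + 1) l
        - 1 / (n:ℝ) * esymm n k l * esymm n 1 l)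
        = (n:ℝ) * (esymm n k l * esymm n 1 l) - (n:ℝ) * ((k:ℝ)+1) * esymm n (k+1) l
          - esymm n k l * esymm n 1 l := by
      field_simp
    rw [expand]
    nlinarith [hmain, mul_le_mul_of_nonneg_right h8 hE.le]
  nlinarith [h9, hn0]
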